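/- arXiv:1910.07752 — 4 statements merged into one kernel-verified Lean document; each statement's English description precedes it below -/
import Mathlib

section
/- Let f : ℝ → ℝ be smooth and nonnegative, tending to 0 at ±∞, such that for every n ≥ 0 the derivative f^(n+2) is nonnegative on some neighbourhood of -∞ (i.e., on (-∞, -M] for some M). If for some n the function x^n f^(n)(x) tends to 0 as x → -∞, then x^(n+1) f^(n+1)(x) also tends to 0 as x → -∞. -/
open Filter Real Set

theorem stmt_0 (f : ℝ → ℝ) (hf : ContDiff ℝ (⊤ : ℕ∞) f) (hpos : ∀ x, 0 ≤ f x)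
    (hlim_top : Tendsto f atTop (nhds 0)) (hlim_bot : Tendsto f atBot (nhds 0))
    (hder : ∀ n : ℕ, ∃ M : ℝ, ∀ x ≤ -M, 0 ≤ iteratedDeriv (n + 2) f x)
    (n : ℕ)
    (hn : Tendsto (fun x => x ^ n * iteratedDeriv n f x) atBot (nhds 0)) :
    Tendsto (fun x => x ^ (n + 1) * iteratedDeriv (n + 1) f x) atBot (nhds 0) := by
  obtain ⟨M, hM⟩ := hder n
  set L : ℝ := max M 1 with hL
  have hL1 : (1:ℝ) ≤ L := le_max_right _ _
  have hML : M ≤ L := le_max_left _ _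
  set g : ℝ → ℝ := iteratedDeriv n f with hg
  set g' : ℝ → ℝ := iteratedDeriv (n + 1) f with hg'
  have hfd : ∀ k : ℕ, Differentiable ℝ (iteratedDeriv k f) := fun k =>
    hf.differentiable_iteratedDeriv k (by
      exact_mod_cast ENat.coe_lt_top k)
  have hdg : ∀ y : ℝ, HasDerivAt g (g' y) y := by
    intro y
    have := ((hfd n) y).hasDerivAt
    rwa [show deriv (iteratedDeriv n f) y = g' y by rw [hg', iteratedDeriv_succ]] at this
  have hdg' : ∀ y : ℝ, HasDerivAt g' (iteratedDeriv (n + 2) f y) y := by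
    intro y
    have := ((hfd (n + 1)) y).hasDerivAt
    rwa [show deriv (iteratedDeriv (n + 1) f) y = iteratedDeriv (n + 2) f y by
      conv_rhs => rw [iteratedDeriv_succ]] at this
  -- g tends to 0 at -∞
  have hg0 : Tendsto g atBot (nhds 0) := by
    apply squeeze_zero_norm' (a := fun x => |x ^ n * g x|)
    · filter_upwards [eventually_le_atBot (-1 : ℝ)] with x hx
      have hx1 : (1:ℝ) ≤ |x| := by rw [abs_of_nonpos (by linarith)]; linarith
      calc ‖g x‖ = 1 * |g x| := by rw [one_mul]; rfl
        _ ≤ |x| ^ n * |g x| := by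
            apply mul_le_mul_of_nonneg_right _ (abs_nonneg _)
            exact one_le_pow₀ hx1
        _ = |x ^ n * g x| := by rw [abs_mul, abs_pow]
    · simpa using hn.abs
  -- g' is monotone on Iic (-L)
  have hmono : MonotoneOn g' (Iic (-L)) := by
    apply monotoneOn_of_deriv_nonneg (convex_Iic _)
      ((hfd (n+1)).continuous.continuousOn)
      ((hfd (n+1)).differentiableOn)
    intro x hx
    rw [interior_Iic] at hx
    rw [(hdg' x).deriv]
    exact hM x (by linarith [hx.out])
  -- g' is nonnegative on Iic (-L)
  have hg'nonneg : ∀ a ≤ -L, 0 ≤ g' a := by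
    intro a ha
    by_contra hneg
    push_neg at hneg
    -- g y ≥ g a + g' a * (y - a) for y ≤ a
    have hanti : AntitoneOn (fun y => g y - g' a * y) (Iic a) := by
      apply antitoneOn_of_deriv_nonpos (convex_Iic _)
      · exact ((hfd n).continuous.continuousOn.sub
          (continuous_const.mul continuous_id).continuousOn)
      · intro y _
        exact ((hfd n y).sub ((differentiable_const _).mul differentiable_id y)).differentiableWithinAt
      · intro y hy
        rw [interior_Iic] at hy
        have : HasDerivAt (fun y => g y - g' a * y) (g' y - g' a * 1) y :=
          (hdg y).sub ((hasDerivAt_id y).const_mul (g' a))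
        rw [this.deriv]
        have : g' y ≤ g' a := hmono (by simp; linarith [hy.out]) (by simpa using ha) (le_of_lt hy)
        linarith
    have hlb : ∀ y ≤ a, g a + g' a * (y - a) ≤ g y := by
      intro y hy
      have := hanti (mem_Iic.2 hy) (mem_Iic.2 le_rfl) hy
      simp only at this
      nlinarith
    obtain ⟨b, hb1, hb2⟩ :=
      ((hg0.eventually (eventually_lt_nhds (by norm_num : (0:ℝ) < 1))).and
        (eventually_le_atBot (min a (a + (1 - g a) / g' a)))).exists
    have hba : b ≤ a := le_trans hb2 (min_le_left _ _)
    have hb3 : b ≤ a + (1 - g a) / g' a := le_trans hb2 (min_le_right _ _)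
    have key : g' a * (b - a) ≥ 1 - g a := by
      have h1 : b - a ≤ (1 - g a) / g' a := by linarith
      have := mul_le_mul_of_nonpos_left h1 (le_of_lt hneg)
      rwa [mul_div_cancel₀ _ (ne_of_lt hneg)] at this
    have := hlb b hba
    linarith
  -- g is monotone on Iic (-L)
  have hgmono : MonotoneOn g (Iic (-L)) := by
    apply monotoneOn_of_deriv_nonneg (convex_Iic _)
      ((hfd n).continuous.continuousOn) ((hfd n).differentiableOn)
    intro x hx
    rw [interior_Iic] at hx
    rw [(hdg x).deriv]
    exact hg'nonneg x (le_of_lt hx)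
  -- g is nonnegative on Iic (-L)
  have hgnonneg : ∀ x ≤ -L, 0 ≤ g x := by
    intro x hx
    apply le_of_tendsto hg0
    filter_upwards [eventually_le_atBot x] with y hy
    exact hgmono (mem_Iic.2 (by linarith)) (mem_Iic.2 hx) hy
  -- final squeeze
  apply squeeze_zero_norm' (a := fun x => 2 ^ (n + 1) * |(x / 2) ^ n * g (x / 2)|)
  · filter_upwards [eventually_le_atBot (-(2 * L))] with x hx
    have hx1 : x ≤ -L := by linarith
    have hx2 : x / 2 ≤ -L := by linarith
    have hxneg : x < 0 := by linarith
    -- key inequality: g' x * (x/2 - x) ≤ g (x/2) - g x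
    have hkey : g' x * (x / 2 - x) ≤ g (x / 2) - g x := by
      have hmono2 : MonotoneOn (fun y => g y - g' x * y) (Icc x (x / 2)) := by
        apply monotoneOn_of_deriv_nonneg (convex_Icc _ _)
        · exact ((hfd n).continuous.continuousOn.sub
            (continuous_const.mul continuous_id).continuousOn)
        · intro y _
          exact ((hfd n y).sub ((differentiable_const _).mul differentiable_id y)).differentiableWithinAt
        · intro y hy
          rw [interior_Icc] at hy
          have hd : HasDerivAt (fun y => g y - g' x * y) (g' y - g' x * 1) y :=
            (hdg y).sub ((hasDerivAt_id y).const_mul (g' x))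
          rw [hd.deriv]
          have : g' x ≤ g' y :=
            hmono (mem_Iic.2 hx1) (mem_Iic.2 (by linarith [hy.2])) (le_of_lt hy.1)
          linarith
      have hxle : x ≤ x / 2 := by linarith
      have := hmono2 (left_mem_Icc.2 hxle) (right_mem_Icc.2 hxle) hxle
      simp only at this
      nlinarith
    have hgx : 0 ≤ g x := hgnonneg x hx1
    have hgx2 : 0 ≤ g (x / 2) := hgnonneg _ hx2
    have hg'x : 0 ≤ g' x := hg'nonneg x hx1
    -- |x|^(n+1) * g' x ≤ 2 * |x|^n * g (x/2)
    have habs : |x| = -x := abs_of_neg hxneg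
    have hstep : (-x) * g' x ≤ 2 * g (x / 2) := by nlinarith
    have hpow : (0:ℝ) ≤ (-x) ^ n := pow_nonneg (by linarith) n
    calc ‖x ^ (n + 1) * g' x‖ = |x| ^ (n + 1) * g' x := by
          rw [Real.norm_eq_abs, abs_mul, abs_pow, abs_of_nonneg hg'x]
      _ = (-x) ^ n * ((-x) * g' x) := by rw [habs, pow_succ]; ring
      _ ≤ (-x) ^ n * (2 * g (x / 2)) := by
          exact mul_le_mul_of_nonneg_left hstep hpow
      _ = 2 ^ (n + 1) * ((-(x / 2)) ^ n * g (x / 2)) := by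
          rw [show (-x : ℝ) = 2 * (-(x/2)) by ring, mul_pow]; ring
      _ ≤ 2 ^ (n + 1) * |(x / 2) ^ n * g (x / 2)| := by
          apply mul_le_mul_of_nonneg_left _ (by positivity)
          rw [abs_mul, abs_pow, abs_of_nonneg hgx2, abs_of_nonpos (by linarith : x / 2 ≤ 0)]
  · have h2 : Tendsto (fun x : ℝ => x / 2) atBot atBot :=
      tendsto_id.atBot_div_const (by norm_num)
    have := ((hn.comp h2).abs.const_mul ((2:ℝ) ^ (n + 1)))
    simpa using this
end

section
/- Let f : ℝ → ℝ be bounded by M, nondecreasing on (-∞, −p] and nonincreasing on [p, ∞) for some p > 0, with f → 0 at ±∞, and suppose the improper Fourier integral 𝓛f(iξ) = ∫_ℝ e^{−iξx} f(x) dx converges for ξ ≠ 0. Then |𝓛f(iξ)| ≤ 4M/|ξ| + 2pM for all ξ ≠ 0. In particular ξ ↦ ξ/(1+ξ) · |𝓛f(iξ)| is bounded on (0, ∞). -/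
open Filter Set MeasureTheory Complex

/-!
On `[-p, p]` the integrand is bounded by `M`, giving `2pM`. On each tail `f` is monotone with
limit `0`, hence nonnegative, and the paper's Stieltjes integration by parts is replaced by the
layer-cake formula `f x = ∫₀^M 1{t < f x} dt`: after Fubini the tail integral is an average over
`t ∈ (0, M]` of `∫ e^{-iξx} dx` over the superlevel sets `{t < f}`, which are intervals, so each
of these has norm at most `2 / |ξ|`.
-/

theorem norm_exp_neg_I_mul_mul (ξ x : ℝ) : ‖cexp (-I * ξ * x)‖ = 1 := by
  rw [show -I * ξ * x = ((-(ξ * x) : ℝ) : ℂ) * I by push_cast; ring, norm_exp_ofReal_mul_I]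

theorem norm_integral_exp_neg_I_mul_le {ξ : ℝ} (hξ : ξ ≠ 0) (a b : ℝ) :
    ‖∫ x in a..b, cexp (-I * ξ * x)‖ ≤ 2 / |ξ| := by
  have hc : -I * ξ ≠ 0 := by simpa using hξ
  rw [integral_exp_mul_complex hc, norm_div, show ‖-I * (ξ : ℂ)‖ = |ξ| by simp]
  have hnum : ‖cexp (-I * ξ * b) - cexp (-I * ξ * a)‖ ≤ 2 := by
    refine (norm_sub_le _ _).trans ?_
    rw [norm_exp_neg_I_mul_mul, norm_exp_neg_I_mul_mul]
    norm_num
  gcongr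

theorem Set.OrdConnected.ae_eq_Ioc {μ : Measure ℝ} [NullSingletonClass μ] {S : Set ℝ}
    (hS : S.OrdConnected) (hSb : Bornology.IsBounded S) (hne : S.Nonempty) :
    S =ᵐ[μ] Ioc (sInf S) (sSup S) := by
  have hIoo : Ioo (sInf S) (sSup S) ⊆ S :=
    IsConnected.Ioo_csInf_csSup_subset ⟨hne, isPreconnected_iff_ordConnected.2 hS⟩
      hSb.bddBelow hSb.bddAbove
  have hIcc : S ⊆ Icc (sInf S) (sSup S) := subset_Icc_csInf_csSup hSb.bddBelow hSb.bddAbove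
  refine EventuallyLE.antisymm ?_ ?_
  · exact hIcc.eventuallyLE.trans Ioc_ae_eq_Icc.symm.le
  · exact Ioo_ae_eq_Ioc.symm.le.trans hIoo.eventuallyLE

theorem norm_setIntegral_exp_neg_I_mul_le {ξ : ℝ} (hξ : ξ ≠ 0) {S : Set ℝ} (hS : S.OrdConnected)
    (hSb : Bornology.IsBounded S) : ‖∫ x in S, cexp (-I * ξ * x)‖ ≤ 2 / |ξ| := by
  rcases S.eq_empty_or_nonempty with rfl | hne
  · simp only [Measure.restrict_empty, integral_zero_measure, norm_zero]
    positivity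
  rw [setIntegral_congr_set (hS.ae_eq_Ioc hSb hne),
    ← intervalIntegral.integral_of_le (csInf_le_csSup hne hSb.bddBelow hSb.bddAbove)]
  exact norm_integral_exp_neg_I_mul_le hξ _ _

theorem setIntegral_Ioc_indicator_Iio {M y : ℝ} (hy0 : 0 ≤ y) (hyM : y ≤ M) (z : ℂ) :
    ∫ t in Ioc 0 M, (Iio y).indicator (fun _ => z) t = y * z := by
  rw [integral_indicator_const z measurableSet_Iio, measureReal_restrict_apply measurableSet_Iio]
  have : Iio y ∩ Ioc 0 M = Ioo 0 y := by
    ext t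
    simp only [mem_inter_iff, mem_Iio, mem_Ioc, mem_Ioo]
    exact ⟨fun h => ⟨h.2.1, h.1⟩, fun h => ⟨h.2, h.1, h.2.le.trans hyM⟩⟩
  rw [this, Real.volume_real_Ioo_of_le hy0, sub_zero, Complex.real_smul]

theorem norm_integral_exp_mul_antitone_le {g : ℝ → ℝ} {M : ℝ} (hg : Antitone g)
    (hg0 : ∀ x, 0 ≤ g x) (hgM : ∀ x, g x ≤ M) {ξ : ℝ} (hξ : ξ ≠ 0) {a b : ℝ} (hab : a ≤ b) :
    ‖∫ x in a..b, cexp (-I * ξ * x) * g x‖ ≤ 2 * M / |ξ| := by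
  set e : ℝ → ℂ := fun x => cexp (-I * ξ * x)
  set D : Set (ℝ × ℝ) := {q | q.2 < g q.1}
  have hD : MeasurableSet D := measurableSet_lt measurable_snd (hg.measurable.comp measurable_fst)
  set F : ℝ × ℝ → ℂ := D.indicator fun q => e q.1
  have hF : Integrable F ((volume.restrict (Ioc a b)).prod (volume.restrict (Ioc 0 M))) := by
    refine Integrable.mono' (integrable_const 1)
      ((Continuous.measurable (by fun_prop)).indicator hD).aestronglyMeasurable
      (ae_of_all _ fun q => ?_)
    exact (norm_indicator_le_norm_self _ _).trans (norm_exp_neg_I_mul_mul ξ q.1).le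
  have layer_cake : ∀ x, e x * g x = ∫ t in Ioc 0 M, F (x, t) := fun x => by
    rw [mul_comm, ← setIntegral_Ioc_indicator_Iio (hg0 x) (hgM x)]
    rfl
  have slice : ∀ t, ‖∫ x in Ioc a b, F (x, t)‖ ≤ 2 / |ξ| := fun t => by
    have hS : MeasurableSet {x | t < g x} := measurableSet_lt measurable_const hg.measurable
    have hlower : IsLowerSet {x | t < g x} := fun x y hyx hx => hx.trans_le (hg hyx)
    change ‖∫ x in Ioc a b, {x | t < g x}.indicator e x‖ ≤ 2 / |ξ|
    rw [integral_indicator hS, Measure.restrict_restrict hS]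
    exact norm_setIntegral_exp_neg_I_mul_le hξ (hlower.ordConnected.inter ordConnected_Ioc)
      ((Metric.isBounded_Ioc a b).subset inter_subset_right)
  calc ‖∫ x in a..b, e x * g x‖
      = ‖∫ t in Ioc 0 M, ∫ x in Ioc a b, F (x, t)‖ := by
        simp_rw [intervalIntegral.integral_of_le hab, layer_cake]
        rw [integral_integral_swap (f := fun x t => F (x, t)) hF]
    _ ≤ 2 / |ξ| * volume.real (Ioc 0 M) :=
        norm_setIntegral_le_of_norm_le_const measure_Ioc_lt_top fun t _ => slice t
    _ = 2 * M / |ξ| := by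
        rw [Real.volume_real_Ioc_of_le ((hg0 0).trans (hgM 0)), sub_zero]
        ring

theorem AntitoneOn.le_of_tendsto_atTop {α β : Type*} [LinearOrder α] [TopologicalSpace β]
    [Preorder β] [OrderClosedTopology β] {f : α → β} {p : α} {l : β} (hf : AntitoneOn f (Ici p))
    (hl : Tendsto f atTop (nhds l)) {x : α} (hx : p ≤ x) : l ≤ f x :=
  haveI : Nonempty α := ⟨x⟩
  le_of_tendsto hl ((eventually_ge_atTop x).mono fun _ hy => hf hx (hx.trans hy) hy)

theorem norm_integral_exp_mul_le_of_antitoneOn_Ici {f : ℝ → ℝ} {M p : ℝ}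
    (hf : AntitoneOn f (Ici p)) (hlim : Tendsto f atTop (nhds 0)) (hfM : ∀ x, f x ≤ M)
    {ξ : ℝ} (hξ : ξ ≠ 0) {R : ℝ} (hpR : p ≤ R) :
    ‖∫ x in p..R, cexp (-I * ξ * x) * f x‖ ≤ 2 * M / |ξ| := by
  have hg : Antitone fun x => f (max p x) := fun x y hxy =>
    hf (le_max_left p x) (le_max_left p y) (max_le_max le_rfl hxy)
  have hg0 : ∀ x, 0 ≤ f (max p x) := fun x => hf.le_of_tendsto_atTop hlim (le_max_left p x)
  refine le_of_eq_of_le ?_ (norm_integral_exp_mul_antitone_le hg hg0 (fun x => hfM _) hξ hpR)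
  refine congrArg _ (intervalIntegral.integral_congr fun x hx => ?_)
  rw [uIcc_of_le hpR] at hx
  simp only [max_eq_right hx.1]

theorem norm_integral_exp_mul_le_of_monotoneOn_Iic {f : ℝ → ℝ} {M p : ℝ}
    (hf : MonotoneOn f (Iic (-p))) (hlim : Tendsto f atBot (nhds 0)) (hfM : ∀ x, f x ≤ M)
    {ξ : ℝ} (hξ : ξ ≠ 0) {R : ℝ} (hpR : p ≤ R) :
    ‖∫ x in (-R)..(-p), cexp (-I * ξ * x) * f x‖ ≤ 2 * M / |ξ| := by
  have hf' : AntitoneOn (fun x => f (-x)) (Ici p) := fun x hx y hy hxy =>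
    hf (mem_Iic.2 (neg_le_neg hy)) (mem_Iic.2 (neg_le_neg hx)) (neg_le_neg hxy)
  have h := norm_integral_exp_mul_le_of_antitoneOn_Ici hf' (hlim.comp tendsto_neg_atTop_atBot)
    (fun x => hfM (-x)) (neg_ne_zero.2 hξ) hpR
  rw [abs_neg] at h
  rw [← intervalIntegral.integral_comp_neg]
  convert h using 5
  congr 1
  push_cast
  ring

theorem norm_integral_exp_mul_le_of_monotone_tails {f : ℝ → ℝ} {M p : ℝ} (hp : 0 < p)
    (hbdd : ∀ x, |f x| ≤ M) (hmono : MonotoneOn f (Iic (-p))) (hanti : AntitoneOn f (Ici p))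
    (hlim_top : Tendsto f atTop (nhds 0)) (hlim_bot : Tendsto f atBot (nhds 0))
    {ξ : ℝ} (hξ : ξ ≠ 0) {R : ℝ} (hpR : p ≤ R) :
    ‖∫ x in (-R)..R, cexp (-I * ξ * x) * f x‖ ≤ 4 * M / |ξ| + 2 * p * M := by
  have hM : 0 ≤ M := (abs_nonneg _).trans (hbdd 0)
  have hfM : ∀ x, f x ≤ M := fun x => (le_abs_self _).trans (hbdd x)
  set h : ℝ → ℂ := fun x => cexp (-I * ξ * x) * f x
  by_cases hint : IntervalIntegrable h volume (-R) R
  swap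
  · rw [intervalIntegral.integral_undef hint, norm_zero]
    positivity
  have hsub : ∀ a ∈ Icc (-R) R, ∀ b ∈ Icc (-R) R, IntervalIntegrable h volume a b :=
    fun a ha b hb => hint.mono_set <| uIcc_subset_uIcc
      (by rwa [uIcc_of_le (by linarith)]) (by rwa [uIcc_of_le (by linarith)])
  have hmid : ‖∫ x in (-p)..p, h x‖ ≤ 2 * p * M := by
    refine (intervalIntegral.norm_integral_le_of_norm_le_const (C := M) fun x _ => ?_).trans_eq ?_
    · rw [norm_mul, norm_exp_neg_I_mul_mul, one_mul, Complex.norm_real]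
      exact hbdd x
    · rw [abs_of_nonneg (by linarith)]
      ring
  rw [← intervalIntegral.integral_add_adjacent_intervals
      (hsub (-R) ⟨le_rfl, by linarith⟩ (-p) ⟨by linarith, by linarith⟩)
      (hsub (-p) ⟨by linarith, by linarith⟩ R ⟨by linarith, le_rfl⟩),
    ← intervalIntegral.integral_add_adjacent_intervals
      (hsub (-p) ⟨by linarith, by linarith⟩ p ⟨by linarith, by linarith⟩)
      (hsub p ⟨by linarith, by linarith⟩ R ⟨by linarith, le_rfl⟩)]
  calc _ ≤ ‖∫ x in (-R)..(-p), h x‖ + ‖∫ x in (-p)..p, h x‖ + ‖∫ x in p..R, h x‖ := by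
        rw [← add_assoc]
        exact norm_add₃_le
    _ ≤ 2 * M / |ξ| + 2 * p * M + 2 * M / |ξ| := by
        gcongr
        · exact norm_integral_exp_mul_le_of_monotoneOn_Iic hmono hlim_bot hfM hξ hpR
        · exact norm_integral_exp_mul_le_of_antitoneOn_Ici hanti hlim_top hfM hξ hpR
    _ = 4 * M / |ξ| + 2 * p * M := by ring

theorem stmt_10 (f : ℝ → ℝ) (M p : ℝ) (hp : 0 < p)
    (hbdd : ∀ x, |f x| ≤ M)
    (hmono : MonotoneOn f (Iic (-p))) (hanti : AntitoneOn f (Ici p))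
    (hlim_top : Tendsto f atTop (nhds 0)) (hlim_bot : Tendsto f atBot (nhds 0))
    (L : ℝ → ℂ)
    (hL : ∀ ξ : ℝ, ξ ≠ 0 →
      Tendsto (fun R : ℝ => ∫ x in (-R)..R, Complex.exp (-Complex.I * ξ * x) * f x)
        atTop (nhds (L ξ))) :
    (∀ ξ : ℝ, ξ ≠ 0 → ‖L ξ‖ ≤ 4 * M / |ξ| + 2 * p * M) ∧
    ∃ C : ℝ, ∀ ξ : ℝ, 0 < ξ → ξ / (1 + ξ) * ‖L ξ‖ ≤ C := by
  have hM : 0 ≤ M := (abs_nonneg _).trans (hbdd 0)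
  have hbound : ∀ ξ : ℝ, ξ ≠ 0 → ‖L ξ‖ ≤ 4 * M / |ξ| + 2 * p * M := fun ξ hξ =>
    le_of_tendsto (hL ξ hξ).norm <| (eventually_ge_atTop p).mono fun R hpR =>
      norm_integral_exp_mul_le_of_monotone_tails hp hbdd hmono hanti hlim_top hlim_bot hξ hpR
  refine ⟨hbound, 4 * M + 2 * p * M, fun ξ hξ => ?_⟩
  have hLξ : ‖L ξ‖ ≤ 4 * M / ξ + 2 * p * M := by
    simpa only [abs_of_pos hξ] using hbound ξ hξ.ne'
  calc ξ / (1 + ξ) * ‖L ξ‖ ≤ ξ / (1 + ξ) * (4 * M / ξ + 2 * p * M) := by gcongr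
    _ = 4 * M / (1 + ξ) + ξ / (1 + ξ) * (2 * p * M) := by field_simp
    _ ≤ 4 * M + 1 * (2 * p * M) := by
        gcongr
        · exact div_le_self (by positivity) (by linarith)
        · exact div_le_one_of_le₀ (by linarith) (by positivity)
    _ = 4 * M + 2 * p * M := by ring
end

section
/- Let (φ_n) be measurable functions on ℝ such that for each n and each k ∈ ℤ, the function φ_n − k changes its sign at most once on ℝ (in the sense that there is s_k with φ_n ≤ k a.e. on (−∞, s_k) and φ_n ≥ k a.e. on (s_k, ∞), or the reverse). If the measures φ_n(s) ds converge vaguely on ℝ to φ(s) ds for a locally integrable function φ, then for every k ∈ ℤ the measure (φ(s) − k) ds also changes its sign at most once. -/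
/-!
Write `ψₙ = φₙ - k` and let `σₙ` be a sign-change point of `ψₙ`. Passing to the
orientation that occurs infinitely often (replacing `ψₙ` by `-ψₙ` if needed), put
`s₀ = limsup σₙ`. A nonnegative test function supported in `{t < s₀}` is supported below
`σₙ` for infinitely many `n`, so its integrals against `ψₙ`, and hence against `ψ = φ - k`,
are `≤ 0`; symmetrically above `s₀`. Mollifying `ψ` with bump functions of shrinking
support turns these integral inequalities into pointwise ones almost everywhere.
-/

open Filter Set MeasureTheory

/-- The measure `ψ(s) ds` changes its sign at most once: there is `s₀ ∈ [-∞, ∞]` with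
`ψ ≤ 0` a.e. below `s₀` and `ψ ≥ 0` a.e. above `s₀`, or the reverse. -/
def SignChangeAtMostOnce (ψ : ℝ → ℝ) : Prop :=
  ∃ s₀ : EReal,
    ((∀ᵐ s : ℝ, (s : EReal) < s₀ → ψ s ≤ 0) ∧ (∀ᵐ s : ℝ, s₀ < (s : EReal) → 0 ≤ ψ s)) ∨
    ((∀ᵐ s : ℝ, (s : EReal) < s₀ → 0 ≤ ψ s) ∧ (∀ᵐ s : ℝ, s₀ < (s : EReal) → ψ s ≤ 0))

open Topology Metric

def NonposBelowNonnegAbove (ψ : ℝ → ℝ) (s₀ : EReal) : Prop :=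
  (∀ᵐ s : ℝ, (s : EReal) < s₀ → ψ s ≤ 0) ∧ (∀ᵐ s : ℝ, s₀ < (s : EReal) → 0 ≤ ψ s)

lemma signChangeAtMostOnce_iff {ψ : ℝ → ℝ} :
    SignChangeAtMostOnce ψ ↔
      ∃ s₀, NonposBelowNonnegAbove ψ s₀ ∨ NonposBelowNonnegAbove (-ψ) s₀ := by
  simp only [SignChangeAtMostOnce, NonposBelowNonnegAbove, Pi.neg_apply, neg_nonpos, neg_nonneg]

def VagueTendsto {ι E : Type*} [TopologicalSpace E] [MeasurableSpace E] (μ : Measure E)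
    (f : ι → E → ℝ) (g : E → ℝ) (l : Filter ι) : Prop :=
  ∀ u : E → ℝ, Continuous u → HasCompactSupport u →
    Tendsto (fun i => ∫ x, u x * f i x ∂μ) l (𝓝 (∫ x, u x * g x ∂μ))

theorem ae_nonpos_of_integral_mul_nonpos {E : Type*} [NormedAddCommGroup E] [NormedSpace ℝ E]
    [FiniteDimensional ℝ E] [MeasurableSpace E] [BorelSpace E] {μ : Measure E}
    [μ.IsAddHaarMeasure] {ψ : E → ℝ} (hψ : LocallyIntegrable ψ μ) {U : Set E} (hU : IsOpen U)
    (h : ∀ u : E → ℝ, Continuous u → HasCompactSupport u → 0 ≤ u → tsupport u ⊆ U →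
      ∫ x, u x * ψ x ∂μ ≤ 0) :
    ∀ᵐ x ∂μ, x ∈ U → ψ x ≤ 0 := by
  let φ : ℕ → ContDiffBump (0 : E) := fun n =>
    ⟨1 / (n + 1), 2 * (1 / (n + 1)), by positivity,
      by linarith [show (0 : ℝ) < 1 / (n + 1) by positivity]⟩
  have hφ : Tendsto (fun n => (φ n).rOut) atTop (𝓝 0) := by
    simpa [φ] using tendsto_one_div_add_atTop_nhds_zero_nat.const_mul (2 : ℝ)
  filter_upwards [ContDiffBump.ae_convolution_tendsto_right_of_locallyIntegrable (K := 2) hφ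
    (.of_forall fun n => le_rfl) hψ] with x hx hxU
  obtain ⟨r, hr, hball⟩ := Metric.isOpen_iff.1 hU x hxU
  -- `(φ n ⋆ ψ) x = ∫ u ψ` for a test function `u` supported in `closedBall x (φ n).rOut ⊆ U`.
  refine le_of_tendsto hx ((hφ.eventually (gt_mem_nhds hr)).mono fun n hn => ?_)
  set u : E → ℝ := fun t => (φ n).normed μ (x - t)
  have hsupp : tsupport u ⊆ closedBall x (φ n).rOut := by
    refine closure_minimal (fun t ht => ?_) isClosed_closedBall
    have : x - t ∈ ball 0 (φ n).rOut := (φ n).support_normed_eq (μ := μ) ▸ ht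
    rw [mem_closedBall, dist_comm, dist_eq_norm]
    exact (mem_ball_zero_iff.1 this).le
  rw [convolution_eq_swap]
  exact h u (((φ n).continuous_normed).comp (continuous_const.sub continuous_id))
    ((isCompact_closedBall x _).of_isClosed_subset (isClosed_tsupport u) hsupp)
    (fun t => (φ n).nonneg_normed _) (hsupp.trans ((closedBall_subset_ball hn).trans hball))

namespace VagueTendsto

variable {ι : Type*} {l : Filter ι}

section TopologicalSpace

variable {E : Type*} [TopologicalSpace E] [MeasurableSpace E] {μ : Measure E}
  {f : ι → E → ℝ} {g : E → ℝ}

lemma mono_left (h : VagueTendsto μ f g l) {l' : Filter ι} (hl : l' ≤ l) :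
    VagueTendsto μ f g l' :=
  fun u hu hcu => (h u hu hcu).mono_left hl

lemma neg (h : VagueTendsto μ f g l) : VagueTendsto μ (fun i x => -f i x) (fun x => -g x) l := by
  intro u hu hcu
  simpa only [mul_neg, integral_neg] using (h u hu hcu).neg

lemma sub_const [OpensMeasurableSpace E] [T2Space E] [IsFiniteMeasureOnCompacts μ]
    (h : VagueTendsto μ f g l) (hf : ∀ i, LocallyIntegrable (f i) μ)
    (hg : LocallyIntegrable g μ) (c : ℝ) :
    VagueTendsto μ (fun i x => f i x - c) (fun x => g x - c) l := by
  intro u hu hcu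
  have hsplit : ∀ v : E → ℝ, LocallyIntegrable v μ →
      ∫ x, u x * (v x - c) ∂μ = ∫ x, u x * v x ∂μ - ∫ x, u x * c ∂μ := fun v hv => by
    simp_rw [mul_sub]
    exact integral_sub (hv.integrable_smul_left_of_hasCompactSupport hu hcu)
      ((hu.integrable_of_hasCompactSupport hcu).mul_const c)
  simp only [hsplit _ hg, hsplit _ (hf _)]
  exact (h u hu hcu).sub_const _

end TopologicalSpace

theorem ae_nonpos_of_frequently {E : Type*} [NormedAddCommGroup E] [NormedSpace ℝ E]
    [FiniteDimensional ℝ E] [MeasurableSpace E] [BorelSpace E] {μ : Measure E}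
    [μ.IsAddHaarMeasure] {f : ι → E → ℝ} {g : E → ℝ} (h : VagueTendsto μ f g l)
    (hg : LocallyIntegrable g μ) {U : Set E} (hU : IsOpen U)
    (hf : ∀ K, IsCompact K → K ⊆ U → ∃ᶠ i in l, ∀ᵐ x ∂μ, x ∈ K → f i x ≤ 0) :
    ∀ᵐ x ∂μ, x ∈ U → g x ≤ 0 := by
  refine ae_nonpos_of_integral_mul_nonpos hg hU fun u hu hcu hu0 huU => ?_
  refine le_of_tendsto_of_frequently (h u hu hcu) ((hf _ hcu huU).mono fun i hi => ?_)
  refine integral_nonpos_of_ae ?_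
  filter_upwards [hi] with x hx
  by_cases hxu : x ∈ tsupport u
  · exact mul_nonpos_of_nonneg_of_nonpos (hu0 x) (hx hxu)
  · simp [image_eq_zero_of_notMem_tsupport hxu]

theorem nonposBelowNonnegAbove_limsup [l.NeBot] {f : ι → ℝ → ℝ} {g : ℝ → ℝ}
    (h : VagueTendsto volume f g l) (hg : LocallyIntegrable g) {σ : ι → EReal}
    (hσ : ∀ᶠ i in l, NonposBelowNonnegAbove (f i) (σ i)) :
    NonposBelowNonnegAbove g (limsup σ l) := by
  constructor
  · refine h.ae_nonpos_of_frequently hg (isOpen_Iio.preimage continuous_coe_real_ereal)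
      fun K hK hKU => ?_
    rcases K.eq_empty_or_nonempty with rfl | hne
    · exact .of_forall fun _ => .of_forall fun _ hx => hx.elim
    obtain ⟨m, hmK, hmax⟩ := hK.exists_isGreatest hne
    have hm : (m : EReal) < limsup σ l := hKU hmK
    refine ((frequently_lt_of_lt_limsup (h := hm)).and_eventually hσ).mono
      fun i ⟨hi, hfi⟩ => ?_
    filter_upwards [hfi.1] with x hx hxK
    exact hx ((EReal.coe_le_coe_iff.2 (hmax hxK)).trans_lt hi)
  · have := h.neg.ae_nonpos_of_frequently hg.neg
      ((isOpen_Ioi (a := limsup σ l)).preimage continuous_coe_real_ereal)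
      fun K hK hKU => ?_
    · filter_upwards [this] with x hx hxU using neg_nonpos.1 (hx hxU)
    rcases K.eq_empty_or_nonempty with rfl | hne
    · exact .of_forall fun _ => .of_forall fun _ hx => hx.elim
    obtain ⟨m, hmK, hmin⟩ := hK.exists_isLeast hne
    have hm : limsup σ l < m := hKU hmK
    refine ((eventually_lt_of_limsup_lt hm).and hσ).frequently.mono
      fun i ⟨hi, hfi⟩ => ?_
    filter_upwards [hfi.2] with x hx hxK
    exact neg_nonpos.2 (hx (hi.trans_le (EReal.coe_le_coe_iff.2 (hmin hxK))))

theorem signChangeAtMostOnce [l.NeBot] {f : ι → ℝ → ℝ} {g : ℝ → ℝ}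
    (h : VagueTendsto volume f g l) (hg : LocallyIntegrable g)
    (hf : ∀ i, SignChangeAtMostOnce (f i)) : SignChangeAtMostOnce g := by
  simp only [signChangeAtMostOnce_iff] at hf ⊢
  choose σ hσ using hf
  by_cases hup : ∃ᶠ i in l, NonposBelowNonnegAbove (f i) (σ i)
  · set S := {i | NonposBelowNonnegAbove (f i) (σ i)}
    have : (l ⊓ 𝓟 S).NeBot := frequently_iff_neBot.1 hup
    exact ⟨_, Or.inl ((h.mono_left (l' := l ⊓ 𝓟 S) inf_le_left).nonposBelowNonnegAbove_limsup hg
      (eventually_inf_principal.2 (.of_forall fun _ => id)))⟩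
  · have hdown : ∀ᶠ i in l, NonposBelowNonnegAbove (-f i) (σ i) :=
      (not_frequently.1 hup).mono fun i hi => (hσ i).resolve_left hi
    exact ⟨_, Or.inr (h.neg.nonposBelowNonnegAbove_limsup hg.neg hdown)⟩

end VagueTendsto

theorem stmt_17_general (φseq : ℕ → ℝ → ℝ) (φ : ℝ → ℝ)
    (hloc : ∀ n, LocallyIntegrable (φseq n))
    (hφloc : LocallyIntegrable φ)
    (hsign : ∀ n, ∀ k : ℤ, SignChangeAtMostOnce (fun s => φseq n s - k))
    (hvague : ∀ u : ℝ → ℝ, Continuous u → HasCompactSupport u →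
      Tendsto (fun n => ∫ s : ℝ, u s * φseq n s) atTop (nhds (∫ s : ℝ, u s * φ s))) :
    ∀ k : ℤ, SignChangeAtMostOnce (fun s => φ s - k) := fun k =>
  VagueTendsto.signChangeAtMostOnce (VagueTendsto.sub_const hvague hloc hφloc k)
    (hφloc.sub (locallyIntegrable_const _)) (fun n => hsign n k)

theorem stmt_17 (φseq : ℕ → ℝ → ℝ) (φ : ℝ → ℝ)
    (hmeas : ∀ n, Measurable (φseq n))
    (hloc : ∀ n, LocallyIntegrable (φseq n))
    (hφloc : LocallyIntegrable φ)
    (hsign : ∀ n, ∀ k : ℤ, SignChangeAtMostOnce (fun s => φseq n s - k))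
    (hvague : ∀ u : ℝ → ℝ, Continuous u → HasCompactSupport u →
      Tendsto (fun n => ∫ s : ℝ, u s * φseq n s) atTop (nhds (∫ s : ℝ, u s * φ s))) :
    ∀ k : ℤ, SignChangeAtMostOnce (fun s => φ s - k) :=
  stmt_17_general φseq φ hloc hφloc hsign hvague
end

section
/- Let f : (0,∞) → ℝ be smooth with f^(k)(x) → 0 as x → 0⁺ for k = 0,…,m−1, and suppose each f^(n) has constant sign on some right neighbourhood of 0 for all n. If for some n > m the function x^{n−m−1} f^{(n−1)}(x) is integrable near 0, then x^{n−m} f^{(n−1)}(x) → 0 as x → 0⁺ and x^{n−m} f^{(n)}(x) is absolutely integrable near 0. -/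
open Filter Set MeasureTheory

private lemma aux_tendsto (g : ℝ → ℝ) (p : ℕ) (ε : ℝ) (hε : 0 < ε)
    (hg0 : ∀ x ∈ Ioo (0:ℝ) ε, 0 ≤ g x)
    (hmono : MonotoneOn g (Ioo (0:ℝ) ε) ∨ AntitoneOn g (Ioo (0:ℝ) ε))
    (hint : IntegrableOn (fun x => x ^ p * g x) (Ioo (0:ℝ) 1)) :
    Tendsto (fun x => x ^ (p+1) * g x) (nhdsWithin 0 (Ioi 0)) (nhds 0) := by
  set Φ : ℝ → ℝ := fun y => ∫ t in Ioc (0:ℝ) y, ‖t ^ p * g t‖ with hΦdef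
  have hint' : IntegrableOn (fun t => ‖t ^ p * g t‖) (Icc (0:ℝ) 1) :=
    (integrableOn_Icc_iff_integrableOn_Ioo).2 hint.norm
  have hΦc : ContinuousOn Φ (Icc 0 1) := intervalIntegral.continuousOn_primitive hint'
  have hΦ0 : Φ 0 = 0 := by simp [hΦdef]
  have hΦnn : ∀ y, 0 ≤ Φ y := fun y =>
    setIntegral_nonneg measurableSet_Ioc (fun x _ => norm_nonneg _)
  have h2x : Tendsto (fun x : ℝ => 2 * x) (nhdsWithin 0 (Ioi 0)) (nhdsWithin 0 (Icc 0 1)) := by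
    rw [tendsto_nhdsWithin_iff]
    constructor
    · have h : Tendsto (fun x:ℝ => 2*x) (nhds 0) (nhds 0) := by
        simpa using (continuous_id.const_mul (2:ℝ)).tendsto (0:ℝ)
      exact h.mono_left nhdsWithin_le_nhds
    · filter_upwards [Ioo_mem_nhdsGT_of_mem
        (show (0:ℝ) ∈ Ico (0:ℝ) 2⁻¹ from ⟨le_refl _, by norm_num⟩)] with x hx
      have h1 := hx.1
      have h2 := hx.2
      exact ⟨by linarith, by linarith⟩
  have hΦtend : Tendsto (fun x => Φ (2 * x)) (nhdsWithin 0 (Ioi 0)) (nhds 0) := by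
    have h := (hΦc 0 ⟨le_refl _, zero_le_one⟩).tendsto
    rw [hΦ0] at h
    exact h.comp h2x
  set c : ℝ := 2 ^ (p+1) with hc
  have hc1 : (1:ℝ) ≤ c := one_le_pow₀ (by norm_num)
  refine squeeze_zero' ?_ ?_ (by simpa using hΦtend.const_mul c)
  · filter_upwards [Ioo_mem_nhdsGT_of_mem ⟨le_refl (0:ℝ), hε⟩] with x hx
    exact mul_nonneg (pow_nonneg hx.1.le _) (hg0 x hx)
  · have hmem : Ioo (0:ℝ) (min (ε/2) 2⁻¹) ∈ nhdsWithin (0:ℝ) (Ioi 0) :=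
      Ioo_mem_nhdsGT_of_mem ⟨le_refl _, lt_min (by linarith) (by norm_num)⟩
    filter_upwards [hmem] with x hx
    have hx0 : 0 < x := hx.1
    have hx2ε : 2 * x < ε := by
      have := lt_of_lt_of_le hx.2 (min_le_left (ε/2) 2⁻¹); linarith
    have hx21 : 2 * x < 1 := by
      have := lt_of_lt_of_le hx.2 (min_le_right (ε/2) 2⁻¹); linarith
    have hIoc_sub : Ioc (0:ℝ) (2*x) ⊆ Ioo (0:ℝ) 1 :=
      fun t ht => ⟨ht.1, lt_of_le_of_lt ht.2 hx21⟩
    have hIntIoc : IntegrableOn (fun t => ‖t ^ p * g t‖) (Ioc 0 (2*x)) :=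
      IntegrableOn.mono_set hint.norm hIoc_sub
    cases hmono with
    | inl hm =>
      have hsub : Ioo x (2*x) ⊆ Ioc 0 (2*x) := fun t ht => ⟨lt_trans hx0 ht.1, ht.2.le⟩
      have hxmem : x ∈ Ioo (0:ℝ) ε := ⟨hx0, by linarith⟩
      have hconst : ∀ t ∈ Ioo x (2*x), x ^ p * g x ≤ ‖t ^ p * g t‖ := by
        intro t ht
        have htmem : t ∈ Ioo (0:ℝ) ε := ⟨lt_trans hx0 ht.1, by linarith [ht.2]⟩
        have h1 : g x ≤ g t := hm hxmem htmem ht.1.le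
        have h2 : x ^ p ≤ t ^ p := by
          apply pow_le_pow_left₀ hx0.le ht.1.le
        have h3 : x ^ p * g x ≤ t ^ p * g t :=
          mul_le_mul h2 h1 (hg0 x hxmem) (pow_nonneg (by linarith [ht.1]) p)
        rw [Real.norm_eq_abs]
        exact h3.trans (le_abs_self _)
      have hvol : (volume (Ioo x (2*x))).toReal = x := by
        rw [Real.volume_Ioo, ENNReal.toReal_ofReal (by linarith)]; ring
      have hge := setIntegral_ge_of_const_le measurableSet_Ioo
        (by rw [Real.volume_Ioo]; exact ENNReal.ofReal_ne_top) hconst (hIntIoc.mono_set hsub)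
      rw [measureReal_def, hvol, smul_eq_mul, mul_comm] at hge
      have hmono_int : ∫ t in Ioo x (2*x), ‖t ^ p * g t‖ ≤ Φ (2*x) :=
        setIntegral_mono_set hIntIoc (Filter.Eventually.of_forall fun t => norm_nonneg _)
          (HasSubset.Subset.eventuallyLE hsub)
      have hkey : x ^ (p+1) * g x ≤ Φ (2*x) := by
        have he : x ^ (p+1) * g x = x ^ p * g x * x := by ring
        rw [he]; exact hge.trans hmono_int
      calc x ^ (p+1) * g x ≤ Φ (2*x) := hkey
        _ ≤ c * Φ (2*x) := le_mul_of_one_le_left (hΦnn _) hc1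
    | inr ham =>
      have hsub : Ioo (x/2) x ⊆ Ioc 0 (2*x) :=
        fun t ht => ⟨lt_trans (by linarith) ht.1, by linarith [ht.2]⟩
      have hxmem : x ∈ Ioo (0:ℝ) ε := ⟨hx0, by linarith⟩
      have hconst : ∀ t ∈ Ioo (x/2) x, (x/2) ^ p * g x ≤ ‖t ^ p * g t‖ := by
        intro t ht
        have htmem : t ∈ Ioo (0:ℝ) ε := ⟨by linarith [ht.1], by linarith [ht.2]⟩
        have h1 : g x ≤ g t := ham htmem hxmem ht.2.le
        have h2 : (x/2) ^ p ≤ t ^ p := by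
          apply pow_le_pow_left₀ (by linarith) ht.1.le
        have h3 : (x/2) ^ p * g x ≤ t ^ p * g t :=
          mul_le_mul h2 h1 (hg0 x hxmem) (pow_nonneg (by linarith [ht.1]) p)
        rw [Real.norm_eq_abs]
        exact h3.trans (le_abs_self _)
      have hvol : (volume (Ioo (x/2) x)).toReal = x/2 := by
        rw [Real.volume_Ioo, ENNReal.toReal_ofReal (by linarith)]; ring
      have hge := setIntegral_ge_of_const_le measurableSet_Ioo
        (by rw [Real.volume_Ioo]; exact ENNReal.ofReal_ne_top) hconst (hIntIoc.mono_set hsub)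
      rw [measureReal_def, hvol, smul_eq_mul, mul_comm] at hge
      have hmono_int : ∫ t in Ioo (x/2) x, ‖t ^ p * g t‖ ≤ Φ (2*x) :=
        setIntegral_mono_set hIntIoc (Filter.Eventually.of_forall fun t => norm_nonneg _)
          (HasSubset.Subset.eventuallyLE hsub)
      have hx2 : x ^ (p+1) = 2 ^ (p+1) * (x/2) ^ (p+1) := by
        rw [div_pow]; field_simp
      calc x ^ (p+1) * g x = c * ((x/2) ^ p * g x * (x/2)) := by
            rw [hx2, hc, pow_succ]; ring
        _ ≤ c * Φ (2*x) := by
            apply mul_le_mul_of_nonneg_left (hge.trans hmono_int) (by positivity)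

private lemma aux_int (g D : ℝ → ℝ) (p : ℕ) (δ : ℝ) (hδ0 : 0 < δ) (hδ1 : δ < 1)
    (hder : ∀ x ∈ Ioi (0:ℝ), HasDerivAt g (D x) x)
    (hcg : ContinuousOn g (Ioi 0)) (hcD : ContinuousOn D (Ioi 0))
    (hDpos : ∀ x ∈ Ioc (0:ℝ) δ, 0 ≤ D x)
    (hint : IntegrableOn (fun x => x ^ p * g x) (Ioo 0 1))
    (htend : Tendsto (fun x => x ^ (p+1) * g x) (nhdsWithin 0 (Ioi 0)) (nhds 0)) :
    IntegrableOn (fun x => x ^ (p+1) * D x) (Ioc 0 δ) := by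
  set h : ℝ → ℝ := fun x => x ^ (p+1) * D x with hh
  set F : ℝ → ℝ := fun x => x ^ (p+1) * g x with hF
  set a : ℕ → ℝ := fun i => δ * (2⁻¹:ℝ) ^ i with ha
  have ha_pos : ∀ i, 0 < a i := fun i => mul_pos hδ0 (pow_pos (by norm_num) i)
  have ha_le : ∀ i, a i ≤ δ := by
    intro i
    have h1 : (2⁻¹:ℝ) ^ i ≤ 1 := pow_le_one₀ (by norm_num) (by norm_num)
    calc a i = δ * (2⁻¹:ℝ) ^ i := rfl
      _ ≤ δ * 1 := mul_le_mul_of_nonneg_left h1 hδ0.le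
      _ = δ := mul_one δ
  have ha_tend : Tendsto a atTop (nhds 0) := by
    have h := tendsto_pow_atTop_nhds_zero_of_lt_one (by norm_num : (0:ℝ) ≤ 2⁻¹) (by norm_num)
    have h2 := h.const_mul δ
    rw [mul_zero] at h2
    exact h2
  have ha_tendW : Tendsto a atTop (nhdsWithin 0 (Ioi 0)) :=
    tendsto_nhdsWithin_iff.2 ⟨ha_tend, Filter.Eventually.of_forall (fun i => ha_pos i)⟩
  have hch : ContinuousOn h (Ioi 0) := (continuous_pow _).continuousOn.mul hcD
  have hfi : ∀ i, IntegrableOn h (Ioc (a i) δ) := by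
    intro i
    have hsub : Icc (a i) δ ⊆ Ioi 0 := fun x hx => lt_of_lt_of_le (ha_pos i) hx.1
    exact ((hch.mono hsub).integrableOn_Icc).mono_set Ioc_subset_Icc_self
  set M : ℝ := ∫ x in Ioo (0:ℝ) 1, ‖x ^ p * g x‖ with hM
  have hMnn : 0 ≤ M := setIntegral_nonneg measurableSet_Ioo (fun x _ => norm_nonneg _)
  have key : ∀ i, ∫ x in Ioc (a i) δ, ‖h x‖ ≤ |F δ| + |F (a i)| + ((p:ℝ)+1) * M := by
    intro i
    set A := a i with hA
    have hA0 : 0 < A := ha_pos i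
    have hAδ : A ≤ δ := ha_le i
    have huIcc : uIcc A δ = Icc A δ := uIcc_of_le hAδ
    have hsub : Icc A δ ⊆ Ioi 0 := fun x hx => lt_of_lt_of_le hA0 hx.1
    have hsub1 : Ioc A δ ⊆ Ioo (0:ℝ) 1 :=
      fun x hx => ⟨lt_trans hA0 hx.1, lt_of_le_of_lt hx.2 hδ1⟩
    have hderF : ∀ x ∈ uIcc A δ,
        HasDerivAt F (((p:ℝ)+1) * x ^ p * g x + x ^ (p+1) * D x) x := by
      intro x hx
      rw [huIcc] at hx
      have h1 : HasDerivAt (fun y : ℝ => y ^ (p+1)) (((p:ℝ)+1) * x ^ p) x := by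
        simpa using hasDerivAt_pow (p+1) x
      exact h1.mul (hder x (hsub hx))
    have hcA : ContinuousOn (fun x => ((p:ℝ)+1) * x ^ p * g x) (Icc A δ) :=
      (continuousOn_const.mul (continuous_pow p).continuousOn).mul (hcg.mono hsub)
    have hcB : ContinuousOn h (Icc A δ) := hch.mono hsub
    have hiA : IntervalIntegrable (fun x => ((p:ℝ)+1) * x ^ p * g x) volume A δ :=
      (huIcc ▸ hcA).intervalIntegrable
    have hiB : IntervalIntegrable h volume A δ := (huIcc ▸ hcB).intervalIntegrable
    have hFTC := intervalIntegral.integral_eq_sub_of_hasDerivAt hderF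
      ((huIcc ▸ (hcA.add hcB)).intervalIntegrable)
    have hadd : ∫ x in A..δ, (((p:ℝ)+1) * x ^ p * g x + h x) =
        (∫ x in A..δ, ((p:ℝ)+1) * x ^ p * g x) + ∫ x in A..δ, h x :=
      intervalIntegral.integral_add hiA hiB
    have hBval : ∫ x in A..δ, h x =
        F δ - F A - ∫ x in A..δ, ((p:ℝ)+1) * x ^ p * g x := by
      rw [hadd] at hFTC; linarith
    have hAbound : |∫ x in A..δ, ((p:ℝ)+1) * x ^ p * g x| ≤ ((p:ℝ)+1) * M := by
      have h1 : |∫ x in A..δ, ((p:ℝ)+1) * x ^ p * g x| ≤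
          ∫ x in A..δ, |((p:ℝ)+1) * x ^ p * g x| :=
        intervalIntegral.abs_integral_le_integral_abs hAδ
      have h2 : ∫ x in A..δ, |((p:ℝ)+1) * x ^ p * g x| =
          ∫ x in Ioc A δ, |((p:ℝ)+1) * x ^ p * g x| :=
        intervalIntegral.integral_of_le hAδ
      have h3 : ∫ x in Ioc A δ, |((p:ℝ)+1) * x ^ p * g x| =
          ((p:ℝ)+1) * ∫ x in Ioc A δ, ‖x ^ p * g x‖ := by
        rw [← integral_const_mul]
        apply setIntegral_congr_fun measurableSet_Ioc
        intro x _
        simp only [Real.norm_eq_abs]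
        rw [mul_assoc, abs_mul, abs_of_nonneg (by positivity : (0:ℝ) ≤ (p:ℝ)+1)]
      have h4 : ∫ x in Ioc A δ, ‖x ^ p * g x‖ ≤ M :=
        setIntegral_mono_set hint.norm
          (Filter.Eventually.of_forall fun t => norm_nonneg _)
          (HasSubset.Subset.eventuallyLE hsub1)
      calc |∫ x in A..δ, ((p:ℝ)+1) * x ^ p * g x| ≤
            ∫ x in Ioc A δ, |((p:ℝ)+1) * x ^ p * g x| := h2 ▸ h1
        _ = ((p:ℝ)+1) * ∫ x in Ioc A δ, ‖x ^ p * g x‖ := h3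
        _ ≤ ((p:ℝ)+1) * M := mul_le_mul_of_nonneg_left h4 (by positivity)
    have hnorm : ∫ x in Ioc A δ, ‖h x‖ = ∫ x in A..δ, h x := by
      rw [intervalIntegral.integral_of_le hAδ]
      apply setIntegral_congr_fun measurableSet_Ioc
      intro x hx
      have hx' : x ∈ Ioc (0:ℝ) δ := ⟨lt_trans hA0 hx.1, hx.2⟩
      have hnn : 0 ≤ h x := mul_nonneg (pow_nonneg (le_of_lt hx'.1) _) (hDpos x hx')
      simp only [Real.norm_eq_abs]
      exact abs_of_nonneg hnn
    rw [hnorm, hBval]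
    have e1 := le_abs_self (F δ)
    have e2 := neg_abs_le (F A)
    have e3 := neg_le_abs (∫ x in A..δ, ((p:ℝ)+1) * x ^ p * g x)
    linarith
  have hFa : Tendsto (fun i => F (a i)) atTop (nhds 0) := htend.comp ha_tendW
  have hFa1 : ∀ᶠ i in atTop, |F (a i)| ≤ 1 := by
    have h := hFa.abs
    rw [abs_zero] at h
    exact h.eventually (eventually_le_nhds one_pos)
  apply MeasureTheory.integrableOn_Ioc_of_intervalIntegral_norm_bounded_left
    (I := |F δ| + 1 + ((p:ℝ)+1) * M) hfi ha_tend
  filter_upwards [hFa1] with i hi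
  calc ∫ x in Ioc (a i) δ, ‖h x‖ ≤ |F δ| + |F (a i)| + ((p:ℝ)+1) * M := key i
    _ ≤ |F δ| + 1 + ((p:ℝ)+1) * M := by linarith

theorem stmt_19 (f : ℝ → ℝ) (m n : ℕ)
    (hf : ∀ x ∈ Ioi (0 : ℝ), ContDiffAt ℝ (⊤ : ℕ∞) f x)
    (hlim : ∀ k < m, Tendsto (fun x => iteratedDeriv k f x) (nhdsWithin 0 (Ioi 0)) (nhds 0))
    (hsign : ∀ j : ℕ, ∃ ε > (0 : ℝ),
      (∀ x ∈ Ioo (0 : ℝ) ε, 0 ≤ iteratedDeriv j f x) ∨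
      (∀ x ∈ Ioo (0 : ℝ) ε, iteratedDeriv j f x ≤ 0))
    (hnm : m < n)
    (hint : IntegrableOn (fun x => x ^ (n - m - 1) * iteratedDeriv (n - 1) f x) (Ioo 0 1)) :
    Tendsto (fun x => x ^ (n - m) * iteratedDeriv (n - 1) f x) (nhdsWithin 0 (Ioi 0)) (nhds 0) ∧
    IntegrableOn (fun x => x ^ (n - m) * iteratedDeriv n f x) (Ioo 0 1) := by
  set p : ℕ := n - m - 1 with hp
  have hpm : n - m = p + 1 := by omega
  set g : ℝ → ℝ := iteratedDeriv (n - 1) f with hg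
  set D : ℝ → ℝ := iteratedDeriv n f with hD
  have hDg : D = deriv g := by
    have h : iteratedDeriv ((n-1)+1) f = deriv (iteratedDeriv (n-1) f) := iteratedDeriv_succ
    rw [show n - 1 + 1 = n by omega] at h
    rw [hD, hg, h]
  -- smoothness chain
  have hco : ContDiffOn ℝ (⊤ : ℕ∞) f (Ioi 0) := fun x hx => (hf x hx).contDiffWithinAt
  have hck : ∀ k : ℕ, ContDiffOn ℝ (⊤ : ℕ∞) (iteratedDeriv k f) (Ioi 0) := by
    intro k
    induction k with
    | zero => simpa [iteratedDeriv_zero] using hco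
    | succ k ih =>
      rw [iteratedDeriv_succ]
      exact ih.deriv_of_isOpen isOpen_Ioi (by simp)
  have hder : ∀ k : ℕ, ∀ x ∈ Ioi (0:ℝ), HasDerivAt (iteratedDeriv k f)
      (iteratedDeriv (k+1) f x) x := by
    intro k x hx
    have hd : DifferentiableAt ℝ (iteratedDeriv k f) x :=
      ((hck k).differentiableOn (by simp)).differentiableAt (isOpen_Ioi.mem_nhds hx)
    simpa [iteratedDeriv_succ] using hd.hasDerivAt
  have hcg : ContinuousOn g (Ioi 0) := (hck (n-1)).continuousOn
  have hcD : ContinuousOn D (Ioi 0) := (hck n).continuousOn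
  have hderg : ∀ x ∈ Ioi (0:ℝ), HasDerivAt g (D x) x := by
    intro x hx
    have h := hder (n-1) x hx
    rwa [show (n-1)+1 = n by omega] at h
  -- signs
  obtain ⟨ε₁, hε₁, hs1⟩ := hsign (n-1)
  obtain ⟨ε₂, hε₂, hs2⟩ := hsign n
  set ε : ℝ := min ε₁ ε₂ with hε
  have hε0 : 0 < ε := lt_min hε₁ hε₂
  have hsubε₁ : Ioo (0:ℝ) ε ⊆ Ioo 0 ε₁ :=
    fun x hx => ⟨hx.1, lt_of_lt_of_le hx.2 (min_le_left _ _)⟩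
  have hsubε₂ : Ioo (0:ℝ) ε ⊆ Ioo 0 ε₂ :=
    fun x hx => ⟨hx.1, lt_of_lt_of_le hx.2 (min_le_right _ _)⟩
  have hεIoi : Ioo (0:ℝ) ε ⊆ Ioi 0 := fun x hx => hx.1
  -- monotonicity of g on Ioo 0 ε
  have hdiffg : DifferentiableOn ℝ g (interior (Ioo (0:ℝ) ε)) := by
    rw [interior_Ioo]
    exact fun x hx => ((hderg x (hεIoi hx)).differentiableAt).differentiableWithinAt
  have hcontg : ContinuousOn g (Ioo (0:ℝ) ε) := hcg.mono hεIoi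
  have hmono : MonotoneOn g (Ioo (0:ℝ) ε) ∨ AntitoneOn g (Ioo (0:ℝ) ε) := by
    cases hs2 with
    | inl hpos =>
      left
      apply monotoneOn_of_deriv_nonneg (convex_Ioo _ _) hcontg hdiffg
      intro x hx
      rw [interior_Ioo] at hx
      rw [← hDg]
      exact hpos x (hsubε₂ hx)
    | inr hneg =>
      right
      apply antitoneOn_of_deriv_nonpos (convex_Ioo _ _) hcontg hdiffg
      intro x hx
      rw [interior_Ioo] at hx
      rw [← hDg]
      exact hneg x (hsubε₂ hx)
  -- Conclusion 1
  have hT : Tendsto (fun x => x ^ (p+1) * g x) (nhdsWithin 0 (Ioi 0)) (nhds 0) := by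
    cases hs1 with
    | inl hpos =>
      exact aux_tendsto g p ε hε0 (fun x hx => hpos x (hsubε₁ hx)) hmono hint
    | inr hneg =>
      have hmono' : MonotoneOn (fun x => -g x) (Ioo (0:ℝ) ε) ∨
          AntitoneOn (fun x => -g x) (Ioo (0:ℝ) ε) := by
        cases hmono with
        | inl h => exact Or.inr h.neg
        | inr h => exact Or.inl h.neg
      have hint' : IntegrableOn (fun x => x ^ p * -g x) (Ioo (0:ℝ) 1) := by
        apply IntegrableOn.congr_fun hint.neg ?_ measurableSet_Ioo
        intro x _
        simp only [Pi.neg_apply]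
        ring
      have h := aux_tendsto (fun x => -g x) p ε hε0
        (fun x hx => neg_nonneg.2 (hneg x (hsubε₁ hx))) hmono' hint'
      have h2 : (fun x => x ^ (p+1) * g x) = fun x => -(x ^ (p+1) * -g x) := by
        funext x; ring
      rw [h2]
      simpa using h.neg
  have hT' : Tendsto (fun x => x ^ (n - m) * iteratedDeriv (n - 1) f x)
      (nhdsWithin 0 (Ioi 0)) (nhds 0) := by
    rw [hpm]; exact hT
  refine ⟨hT', ?_⟩
  -- Conclusion 2
  rw [hpm]
  set δ : ℝ := min (ε/2) 2⁻¹ with hδ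
  have hδ0 : 0 < δ := lt_min (by linarith) (by norm_num)
  have hδ1 : δ < 1 := lt_of_le_of_lt (min_le_right _ _) (by norm_num)
  have hδε : δ < ε := lt_of_le_of_lt (min_le_left _ _) (by linarith)
  have hIocsub : Ioc (0:ℝ) δ ⊆ Ioo 0 ε := fun x hx => ⟨hx.1, lt_of_le_of_lt hx.2 hδε⟩
  have h1 : IntegrableOn (fun x => x ^ (p+1) * D x) (Ioc 0 δ) := by
    cases hs2 with
    | inl hpos =>
      exact aux_int g D p δ hδ0 hδ1 hderg hcg hcD
        (fun x hx => hpos x (hsubε₂ (hIocsub hx))) hint hT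
    | inr hneg =>
      have hderg' : ∀ x ∈ Ioi (0:ℝ), HasDerivAt (fun y => -g y) (-D x) x :=
        fun x hx => (hderg x hx).neg
      have hint' : IntegrableOn (fun x => x ^ p * -g x) (Ioo (0:ℝ) 1) := by
        apply IntegrableOn.congr_fun hint.neg ?_ measurableSet_Ioo
        intro x _
        simp only [Pi.neg_apply]
        ring
      have htend' : Tendsto (fun x => x ^ (p+1) * -g x) (nhdsWithin 0 (Ioi 0)) (nhds 0) := by
        have h2 : (fun x => x ^ (p+1) * -g x) = fun x => -(x ^ (p+1) * g x) := by
          funext x; ring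
        rw [h2]; simpa using hT.neg
      have h := aux_int (fun y => -g y) (fun y => -D y) p δ hδ0 hδ1 hderg'
        (hcg.neg) (hcD.neg)
        (fun x hx => neg_nonneg.2 (hneg x (hsubε₂ (hIocsub hx)))) hint' htend'
      apply IntegrableOn.congr_fun h.neg ?_ measurableSet_Ioc
      intro x _
      simp only [Pi.neg_apply]
      ring
  have h2 : IntegrableOn (fun x => x ^ (p+1) * D x) (Icc δ 1) := by
    have hsub : Icc δ 1 ⊆ Ioi (0:ℝ) := fun x hx => lt_of_lt_of_le hδ0 hx.1
    exact ((continuous_pow _).continuousOn.mul (hcD.mono hsub)).integrableOn_Icc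
  apply (h1.union h2).mono_set
  intro x hx
  rcases le_or_gt x δ with hle | hlt
  · exact Or.inl ⟨hx.1, hle⟩
  · exact Or.inr ⟨hlt.le, hx.2.le⟩
end
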